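/- Let T_n = [t_{|i-j|}] be an n×n real symmetric Toeplitz matrix (n ≥ 1). Then the matrix S_n · τ(T_n) · S_n is a diagonal matrix; equivalently, τ(T_n) = S_n Λ_n S_n for some real diagonal matrix Λ_n. -/
import Mathlib


/-- The sine transform matrix `S_n` with entries
`√(2/(n+1)) · sin(π i j/(n+1))` for `1 ≤ i, j ≤ n`. -/
noncomputable def Smat (n : ℕ) : Matrix (Fin n) (Fin n) ℝ :=
  Matrix.of fun i j =>
    Real.sqrt (2 / (n + 1)) *
      Real.sin (Real.pi * ((i : ℝ) + 1) * ((j : ℝ) + 1) / (n + 1))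

/-- The symmetric Toeplitz matrix `T_n = [t_{|i-j|}]` generated by `t`. -/
noncomputable def toeplitzMat (t : ℕ → ℝ) (n : ℕ) : Matrix (Fin n) (Fin n) ℝ :=
  Matrix.of fun i j => t (((i : ℤ) - (j : ℤ)).natAbs)

/-- The Hankel correction matrix `H_n` (1-based indices `i, j`):
`[H_n]_{ij} = t_{i+j}` for `2 ≤ i+j ≤ n-1`, `0` for `n ≤ i+j ≤ n+2`,
and `t_{2n+2-(i+j)}` for `n+3 ≤ i+j ≤ 2n`. -/
noncomputable def hankelMat (t : ℕ → ℝ) (n : ℕ) : Matrix (Fin n) (Fin n) ℝ :=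
  Matrix.of fun i j =>
    let s := (i : ℕ) + (j : ℕ) + 2
    if s ≤ n - 1 then t s else if s ≤ n + 2 then 0 else t (2 * n + 2 - s)

/-- The τ matrix `τ(T_n) = T_n - H_n`. -/
noncomputable def tauMat (t : ℕ → ℝ) (n : ℕ) : Matrix (Fin n) (Fin n) ℝ :=
  toeplitzMat t n - hankelMat t n

open Real Finset

noncomputable def th (n : ℕ) (k : Fin n) : ℝ := Real.pi * ((k : ℝ) + 1) / ((n : ℝ) + 1)

noncomputable def cc (n : ℕ) (k : Fin n) (m : ℕ) : ℝ :=
  if m = 0 then 1 else 2 * Real.cos ((m : ℝ) * th n k)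

noncomputable def lam (t : ℕ → ℝ) (n : ℕ) (k : Fin n) : ℝ :=
  ∑ m ∈ Finset.range n, t m * cc n k m

lemma hdec (t : ℕ → ℝ) (n : ℕ) (i j : Fin n) :
    tauMat t n i j = ∑ m ∈ Finset.range n,
      ((if (i : ℕ) = (j : ℕ) + m then t m else 0)
        + (if (j : ℕ) = (i : ℕ) + m ∧ m ≠ 0 then t m else 0)
        - (if (i : ℕ) + (j : ℕ) + 2 = m then t m else 0)
        - (if (i : ℕ) + (j : ℕ) + 2 + m = 2 * n + 2 then t m else 0)) := by
  have hi := i.isLt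
  have hj := j.isLt
  have e1 : ∑ m ∈ Finset.range n, (if (i : ℕ) = (j : ℕ) + m then t m else 0)
      = if (j : ℕ) ≤ (i : ℕ) then t ((i : ℕ) - (j : ℕ)) else 0 := by
    by_cases h : (j : ℕ) ≤ (i : ℕ)
    · rw [if_pos h, Finset.sum_eq_single_of_mem ((i : ℕ) - (j : ℕ))
        (Finset.mem_range.2 (by omega))]
      · rw [if_pos (by omega)]
      · intro m _ hm; rw [if_neg (by omega)]
    · rw [if_neg h, Finset.sum_eq_zero]; intro m _; rw [if_neg (by omega)]
  have e2 : ∑ m ∈ Finset.range n, (if (j : ℕ) = (i : ℕ) + m ∧ m ≠ 0 then t m else 0)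
      = if (i : ℕ) < (j : ℕ) then t ((j : ℕ) - (i : ℕ)) else 0 := by
    by_cases h : (i : ℕ) < (j : ℕ)
    · rw [if_pos h, Finset.sum_eq_single_of_mem ((j : ℕ) - (i : ℕ))
        (Finset.mem_range.2 (by omega))]
      · rw [if_pos (by constructor <;> omega)]
      · intro m _ hm; rw [if_neg (by omega)]
    · rw [if_neg h, Finset.sum_eq_zero]; intro m _; rw [if_neg (by omega)]
  have e3 : ∑ m ∈ Finset.range n, (if (i : ℕ) + (j : ℕ) + 2 = m then t m else 0)
      = if (i : ℕ) + (j : ℕ) + 2 < n then t ((i : ℕ) + (j : ℕ) + 2) else 0 := by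
    by_cases h : (i : ℕ) + (j : ℕ) + 2 < n
    · rw [if_pos h, Finset.sum_eq_single_of_mem ((i : ℕ) + (j : ℕ) + 2)
        (Finset.mem_range.2 (by omega))]
      · rw [if_pos (by omega)]
      · intro m _ hm; rw [if_neg (by omega)]
    · rw [if_neg h, Finset.sum_eq_zero]; intro m hm; rw [if_neg (by simp at hm; omega)]
  have e4 : ∑ m ∈ Finset.range n, (if (i : ℕ) + (j : ℕ) + 2 + m = 2 * n + 2 then t m else 0)
      = if n + 1 ≤ (i : ℕ) + (j : ℕ) then t (2 * n - ((i : ℕ) + (j : ℕ))) else 0 := by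
    by_cases h : n + 1 ≤ (i : ℕ) + (j : ℕ)
    · rw [if_pos h, Finset.sum_eq_single_of_mem (2 * n - ((i : ℕ) + (j : ℕ)))
        (Finset.mem_range.2 (by omega))]
      · rw [if_pos (by omega)]
      · intro m _ hm; rw [if_neg (by omega)]
    · rw [if_neg h, Finset.sum_eq_zero]; intro m hm; rw [if_neg (by simp at hm; omega)]
  rw [Finset.sum_sub_distrib, Finset.sum_sub_distrib, Finset.sum_add_distrib, e1, e2, e3, e4]
  simp only [tauMat, toeplitzMat, hankelMat, Matrix.sub_apply, Matrix.of_apply]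
  rcases le_or_gt (j : ℕ) (i : ℕ) with hji | hji
  · have hA : ((i : ℤ) - (j : ℤ)).natAbs = (i : ℕ) - (j : ℕ) := by omega
    rw [hA]
    have harg : 2 * n + 2 - ((i : ℕ) + (j : ℕ) + 2) = 2 * n - ((i : ℕ) + (j : ℕ)) := by omega
    simp only [harg]
    split_ifs <;>
      first
        | (exfalso; omega)
        | ring
        | (rw [show 2 + (i : ℕ) + (j : ℕ) = (i : ℕ) + (j : ℕ) + 2 from by omega]; ring)
        | (rw [show n * 2 - ((i : ℕ) + (j : ℕ)) = 2 * n - ((i : ℕ) + (j : ℕ)) from by omega]; ring)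
  · have hA : ((i : ℤ) - (j : ℤ)).natAbs = (j : ℕ) - (i : ℕ) := by omega
    rw [hA]
    have harg : 2 * n + 2 - ((i : ℕ) + (j : ℕ) + 2) = 2 * n - ((i : ℕ) + (j : ℕ)) := by omega
    simp only [harg]
    split_ifs <;>
      first
        | (exfalso; omega)
        | ring
        | (rw [show 2 + (i : ℕ) + (j : ℕ) = (i : ℕ) + (j : ℕ) + 2 from by omega]; ring)
        | (rw [show n * 2 - ((i : ℕ) + (j : ℕ)) = 2 * n - ((i : ℕ) + (j : ℕ)) from by omega]; ring)

lemma sin_np1 (n : ℕ) (k : Fin n) : Real.sin (((n : ℝ) + 1) * th n k) = 0 := by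
  have hne : ((n : ℝ) + 1) ≠ 0 := by positivity
  have : ((n : ℝ) + 1) * th n k = (((k : ℕ) + 1 : ℕ) : ℝ) * Real.pi := by
    rw [th]; push_cast; field_simp
  rw [this, Real.sin_nat_mul_pi]

lemma gsum (n : ℕ) (t : ℕ → ℝ) (k i : Fin n) (m : ℕ) (hm : m < n) :
    ∑ j ∈ Finset.range n,
      ((if (i : ℕ) = j + m then t m else 0)
        + (if (j = (i : ℕ) + m ∧ m ≠ 0) then t m else 0)
        - (if (i : ℕ) + j + 2 = m then t m else 0)
        - (if (i : ℕ) + j + 2 + m = 2 * n + 2 then t m else 0))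
        * Real.sin (((j : ℝ) + 1) * th n k)
      = t m * cc n k m * Real.sin (((i : ℝ) + 1) * th n k) := by
  set θ := th n k with hθ
  have hi := i.isLt
  have hk := k.isLt
  have hsum : ∑ j ∈ Finset.range n,
      ((if (i : ℕ) = j + m then t m else 0)
        + (if (j = (i : ℕ) + m ∧ m ≠ 0) then t m else 0)
        - (if (i : ℕ) + j + 2 = m then t m else 0)
        - (if (i : ℕ) + j + 2 + m = 2 * n + 2 then t m else 0))
        * Real.sin (((j : ℝ) + 1) * θ)
      = (∑ j ∈ Finset.range n,
          if (i : ℕ) = j + m then t m * Real.sin (((j : ℝ) + 1) * θ) else 0)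
        + (∑ j ∈ Finset.range n,
          if (j = (i : ℕ) + m ∧ m ≠ 0) then t m * Real.sin (((j : ℝ) + 1) * θ) else 0)
        - (∑ j ∈ Finset.range n,
          if (i : ℕ) + j + 2 = m then t m * Real.sin (((j : ℝ) + 1) * θ) else 0)
        - (∑ j ∈ Finset.range n,
          if (i : ℕ) + j + 2 + m = 2 * n + 2 then t m * Real.sin (((j : ℝ) + 1) * θ) else 0) := by
    rw [← Finset.sum_add_distrib, ← Finset.sum_sub_distrib, ← Finset.sum_sub_distrib]
    exact Finset.sum_congr rfl fun j _ => by split_ifs <;> ring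
  rw [hsum]
  have g1 : (∑ j ∈ Finset.range n,
        if (i : ℕ) = j + m then t m * Real.sin (((j : ℝ) + 1) * θ) else 0)
      = if m ≤ (i : ℕ) then t m * Real.sin (((i : ℝ) + 1 - (m : ℝ)) * θ) else 0 := by
    by_cases h : m ≤ (i : ℕ)
    · rw [if_pos h, Finset.sum_eq_single_of_mem ((i : ℕ) - m)
        (Finset.mem_range.2 (by omega))]
      · rw [if_pos (by omega)]
        have e : ((((i : ℕ) - m : ℕ) : ℝ) + 1) * θ = ((i : ℝ) + 1 - (m : ℝ)) * θ := by
          rw [Nat.cast_sub h]; ring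
        rw [e]
      · intro b _ hb; rw [if_neg (by omega)]
    · rw [if_neg h, Finset.sum_eq_zero]; intro b _; rw [if_neg (by omega)]
  have g2 : (∑ j ∈ Finset.range n,
        if (j = (i : ℕ) + m ∧ m ≠ 0) then t m * Real.sin (((j : ℝ) + 1) * θ) else 0)
      = if ((i : ℕ) + m < n ∧ m ≠ 0) then
          t m * Real.sin (((i : ℝ) + 1 + (m : ℝ)) * θ) else 0 := by
    by_cases h : ((i : ℕ) + m < n ∧ m ≠ 0)
    · rw [if_pos h, Finset.sum_eq_single_of_mem ((i : ℕ) + m)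
        (Finset.mem_range.2 (by omega))]
      · rw [if_pos ⟨rfl, h.2⟩]
        have e : ((((i : ℕ) + m : ℕ) : ℝ) + 1) * θ = ((i : ℝ) + 1 + (m : ℝ)) * θ := by
          push_cast; ring
        rw [e]
      · intro b _ hb; rw [if_neg (by tauto)]
    · rw [if_neg h, Finset.sum_eq_zero]; intro b hb
      rw [if_neg (by simp at hb; omega)]
  have g3 : (∑ j ∈ Finset.range n,
        if (i : ℕ) + j + 2 = m then t m * Real.sin (((j : ℝ) + 1) * θ) else 0)
      = if (i : ℕ) + 2 ≤ m then t m * Real.sin (((m : ℝ) - (i : ℝ) - 1) * θ) else 0 := by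
    by_cases h : (i : ℕ) + 2 ≤ m
    · rw [if_pos h, Finset.sum_eq_single_of_mem (m - ((i : ℕ) + 2))
        (Finset.mem_range.2 (by omega))]
      · rw [if_pos (by omega)]
        have e : (((m - ((i : ℕ) + 2) : ℕ) : ℝ) + 1) * θ = ((m : ℝ) - (i : ℝ) - 1) * θ := by
          rw [Nat.cast_sub h]; push_cast; ring
        rw [e]
      · intro b _ hb; rw [if_neg (by omega)]
    · rw [if_neg h, Finset.sum_eq_zero]; intro b _; rw [if_neg (by omega)]
  have g4 : (∑ j ∈ Finset.range n,
        if (i : ℕ) + j + 2 + m = 2 * n + 2 then t m * Real.sin (((j : ℝ) + 1) * θ) else 0)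
      = if n + 1 ≤ (i : ℕ) + m then
          t m * Real.sin ((2 * (n : ℝ) + 1 - (i : ℝ) - (m : ℝ)) * θ) else 0 := by
    by_cases h : n + 1 ≤ (i : ℕ) + m
    · rw [if_pos h, Finset.sum_eq_single_of_mem (2 * n - ((i : ℕ) + m))
        (Finset.mem_range.2 (by omega))]
      · rw [if_pos (by omega)]
        have e : (((2 * n - ((i : ℕ) + m) : ℕ) : ℝ) + 1) * θ
            = (2 * (n : ℝ) + 1 - (i : ℝ) - (m : ℝ)) * θ := by
          rw [Nat.cast_sub (by omega)]; push_cast; ring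
        rw [e]
      · intro b _ hb; rw [if_neg (by omega)]
    · rw [if_neg h, Finset.sum_eq_zero]; intro b hb
      rw [if_neg (by simp only [Finset.mem_range] at hb; omega)]
  rw [g1, g2, g3, g4]
  by_cases hm0 : m = 0
  · subst hm0
    rw [if_pos (Nat.zero_le _), if_neg (by simp), if_neg (by omega), if_neg (by omega)]
    rw [cc, if_pos rfl]
    norm_num
  · have hL : (if m ≤ (i : ℕ) then t m * Real.sin (((i : ℝ) + 1 - (m : ℝ)) * θ) else 0)
        - (if (i : ℕ) + 2 ≤ m then t m * Real.sin (((m : ℝ) - (i : ℝ) - 1) * θ) else 0)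
        = t m * Real.sin (((i : ℝ) + 1 - (m : ℝ)) * θ) := by
      rcases lt_trichotomy m ((i : ℕ) + 1) with h | h | h
      · rw [if_pos (by omega), if_neg (by omega), sub_zero]
      · rw [if_neg (by omega), if_neg (by omega)]
        have hc : (m : ℝ) = (i : ℝ) + 1 := by exact_mod_cast congrArg (Nat.cast (R := ℝ)) h
        have e : ((i : ℝ) + 1 - (m : ℝ)) * θ = 0 := by rw [hc]; ring
        rw [e, Real.sin_zero, mul_zero, sub_zero]
      · rw [if_neg (by omega), if_pos (by omega)]
        have e : ((m : ℝ) - (i : ℝ) - 1) * θ = -(((i : ℝ) + 1 - (m : ℝ)) * θ) := by ring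
        rw [e, Real.sin_neg, zero_sub]; ring
    have hR : (if ((i : ℕ) + m < n ∧ m ≠ 0) then
          t m * Real.sin (((i : ℝ) + 1 + (m : ℝ)) * θ) else 0)
        - (if n + 1 ≤ (i : ℕ) + m then
          t m * Real.sin ((2 * (n : ℝ) + 1 - (i : ℝ) - (m : ℝ)) * θ) else 0)
        = t m * Real.sin (((i : ℝ) + 1 + (m : ℝ)) * θ) := by
      rcases lt_trichotomy ((i : ℕ) + m) n with h | h | h
      · rw [if_pos ⟨h, hm0⟩, if_neg (by omega), sub_zero]
      · rw [if_neg (by omega), if_neg (by omega)]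
        have hc : (i : ℝ) + (m : ℝ) = (n : ℝ) := by exact_mod_cast congrArg (Nat.cast (R := ℝ)) h
        have e : ((i : ℝ) + 1 + (m : ℝ)) * θ = ((n : ℝ) + 1) * θ := by rw [← hc]; ring
        rw [e, hθ, sin_np1, mul_zero, sub_zero]
      · rw [if_neg (by omega), if_pos (by omega), zero_sub]
        have hne : ((n : ℝ) + 1) ≠ 0 := by positivity
        have e : (2 * (n : ℝ) + 1 - (i : ℝ) - (m : ℝ)) * θ
            = (((k : ℤ) + 1 : ℤ) : ℝ) * (2 * Real.pi) - ((i : ℝ) + 1 + (m : ℝ)) * θ := by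
          rw [hθ, th]; push_cast; field_simp; ring
        rw [e, Real.sin_int_mul_two_pi_sub]; ring
    have hsplit : ∀ a b c d : ℝ, a + b - c - d = (a - c) + (b - d) := by intros; ring
    rw [hsplit, hL, hR, cc, if_neg hm0]
    have e1 : ((i : ℝ) + 1 - (m : ℝ)) * θ = ((i : ℝ) + 1) * θ - (m : ℝ) * θ := by ring
    have e2 : ((i : ℝ) + 1 + (m : ℝ)) * θ = ((i : ℝ) + 1) * θ + (m : ℝ) * θ := by ring
    rw [e1, e2, Real.sin_sub, Real.sin_add]
    ring



lemma sum_cos_mul (α : ℝ) (N : ℕ) :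
    (∑ v ∈ Finset.range N, Real.cos (((v : ℝ) + 1) * α)) * (2 * Real.sin (α / 2))
      = Real.sin (((N : ℝ) + 1 / 2) * α) - Real.sin (α / 2) := by
  induction N with
  | zero => simp; rw [div_eq_inv_mul, sub_self]
  | succ N ih =>
    rw [Finset.sum_range_succ, add_mul, ih]
    have h : Real.sin (((N : ℝ) + 1 + 1 / 2) * α) - Real.sin (((N : ℝ) + 1 / 2) * α)
        = 2 * Real.sin (α / 2) * Real.cos (((N : ℝ) + 1) * α) := by
      rw [Real.sin_sub_sin]
      ring_nf
    push_cast
    linarith [h]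

lemma sum_cos_eval (n : ℕ) (m : ℤ) (h0 : m ≠ 0) (h2 : |m| < 2 * (n + 1)) :
    ∑ v ∈ Finset.range n, Real.cos (((v : ℝ) + 1) * ((m : ℝ) * Real.pi / (n + 1)))
      = -(1 + (-1 : ℝ) ^ m) / 2 := by
  set α : ℝ := (m : ℝ) * Real.pi / (n + 1) with hα
  have hn1 : (0 : ℝ) < (n : ℝ) + 1 := by positivity
  have hs : Real.sin (α / 2) ≠ 0 := by
    rw [Real.sin_ne_zero_iff]
    intro z hz
    rw [hα] at hz
    have hc : (z : ℝ) * (2 * ((n : ℝ) + 1)) = (m : ℝ) := by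
      field_simp at hz
      nlinarith [Real.pi_pos, hz]
    have hzm : z * (2 * ((n : ℤ) + 1)) = m := by exact_mod_cast hc
    rcases eq_or_ne z 0 with rfl | hz0
    · simp at hzm; omega
    · have h1 : (1 : ℤ) ≤ |z| := Int.one_le_abs hz0
      have : 2 * ((n : ℤ) + 1) ≤ |m| := by
        rw [← hzm, abs_mul, abs_of_nonneg (by positivity : (0:ℤ) ≤ 2 * ((n:ℤ) + 1))]
        nlinarith
      omega
  have key := sum_cos_mul α n
  have harg : ((n : ℝ) + 1 / 2) * α = (m : ℝ) * Real.pi - α / 2 := by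
    rw [hα]; field_simp; ring
  rw [harg, Real.sin_int_mul_pi_sub] at key
  have h2' : (∑ v ∈ Finset.range n, Real.cos (((v : ℝ) + 1) * α)) = (-(-1:ℝ)^m - 1) / 2 := by
    have := mul_right_cancel₀ hs (show
      ((∑ v ∈ Finset.range n, Real.cos (((v : ℝ) + 1) * α)) * 2) * Real.sin (α/2)
        = (-(-1:ℝ)^m - 1) * Real.sin (α/2) by linear_combination key)
    linarith
  rw [h2']; ring

open Real Finset

lemma sin_orth (n : ℕ) (a b : Fin n) :
    ∑ j ∈ Finset.range n,
      Real.sin (((j : ℝ) + 1) * (Real.pi * ((a : ℝ) + 1) / (n + 1))) *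
        Real.sin (((j : ℝ) + 1) * (Real.pi * ((b : ℝ) + 1) / (n + 1)))
      = if a = b then ((n : ℝ) + 1) / 2 else 0 := by
  set m1 : ℤ := (a : ℤ) - (b : ℤ) with hm1
  set m2 : ℤ := (a : ℤ) + (b : ℤ) + 2 with hm2
  have hterm : ∀ j ∈ Finset.range n,
      Real.sin (((j : ℝ) + 1) * (Real.pi * ((a : ℝ) + 1) / (n + 1))) *
        Real.sin (((j : ℝ) + 1) * (Real.pi * ((b : ℝ) + 1) / (n + 1)))
      = (Real.cos (((j : ℝ) + 1) * ((m1 : ℝ) * Real.pi / (n + 1)))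
          - Real.cos (((j : ℝ) + 1) * ((m2 : ℝ) * Real.pi / (n + 1)))) / 2 := by
    intro j _
    rw [Real.cos_sub_cos]
    have e1 : (((j : ℝ) + 1) * ((m1 : ℝ) * Real.pi / (n + 1))
        + ((j : ℝ) + 1) * ((m2 : ℝ) * Real.pi / (n + 1))) / 2
        = ((j : ℝ) + 1) * (Real.pi * ((a : ℝ) + 1) / (n + 1)) := by
      rw [hm1, hm2]; push_cast; ring
    have e2 : (((j : ℝ) + 1) * ((m1 : ℝ) * Real.pi / (n + 1))
        - ((j : ℝ) + 1) * ((m2 : ℝ) * Real.pi / (n + 1))) / 2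
        = -(((j : ℝ) + 1) * (Real.pi * ((b : ℝ) + 1) / (n + 1))) := by
      rw [hm1, hm2]; push_cast; ring
    rw [e1, e2, Real.sin_neg]
    ring
  rw [Finset.sum_congr rfl hterm, ← Finset.sum_div, Finset.sum_sub_distrib]
  have hev : (-1 : ℝ) ^ m2 = (-1 : ℝ) ^ m1 := by
    have hme : m2 = m1 + 2 * ((b : ℤ) + 1) := by rw [hm1, hm2]; ring
    have he : (-1 : ℝ) ^ (2 * ((b : ℤ) + 1)) = 1 :=
      Even.neg_one_zpow ⟨(b : ℤ) + 1, by ring⟩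
    rw [hme, zpow_add₀ (by norm_num : (-1 : ℝ) ≠ 0), he, mul_one]
  have hs2 : ∑ j ∈ Finset.range n, Real.cos (((j : ℝ) + 1) * ((m2 : ℝ) * Real.pi / (n + 1)))
      = -(1 + (-1 : ℝ) ^ m2) / 2 := by
    apply sum_cos_eval
    · omega
    · have := a.isLt; have := b.isLt
      rw [hm2, abs_of_nonneg (by omega)]; omega
  by_cases h : a = b
  · subst h
    have h1 : ∀ j ∈ Finset.range n,
        Real.cos (((j : ℝ) + 1) * ((m1 : ℝ) * Real.pi / (n + 1))) = 1 := by
      intro j _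
      rw [hm1]
      simp
    rw [Finset.sum_congr rfl h1, hs2, hev]
    have : (-1 : ℝ) ^ m1 = 1 := by rw [hm1]; simp
    rw [this]
    simp
  · have hne : m1 ≠ 0 := by
      rw [hm1]
      intro hc
      exact h (Fin.ext (by omega))
    have hs1 : ∑ j ∈ Finset.range n, Real.cos (((j : ℝ) + 1) * ((m1 : ℝ) * Real.pi / (n + 1)))
        = -(1 + (-1 : ℝ) ^ m1) / 2 := by
      apply sum_cos_eval
      · exact hne
      · have := a.isLt; have := b.isLt
        rw [hm1, abs_sub_lt_iff]
        constructor <;> omega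
    rw [hs1, hs2, hev, if_neg h]
    ring


lemma tau_row (n : ℕ) (t : ℕ → ℝ) (k i : Fin n) :
    (∑ j : Fin n, tauMat t n i j * Real.sin (((j : ℝ) + 1) * th n k))
      = lam t n k * Real.sin (((i : ℝ) + 1) * th n k) := by
  have step1 : (∑ j : Fin n, tauMat t n i j * Real.sin (((j : ℝ) + 1) * th n k))
      = ∑ j ∈ Finset.range n, ∑ m ∈ Finset.range n,
          ((if (i : ℕ) = j + m then t m else 0)
            + (if (j = (i : ℕ) + m ∧ m ≠ 0) then t m else 0)
            - (if (i : ℕ) + j + 2 = m then t m else 0)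
            - (if (i : ℕ) + j + 2 + m = 2 * n + 2 then t m else 0))
            * Real.sin (((j : ℝ) + 1) * th n k) := by
    rw [← Fin.sum_univ_eq_sum_range]
    refine Finset.sum_congr rfl fun j _ => ?_
    rw [hdec t n i j, Finset.sum_mul]
  rw [step1, Finset.sum_comm]
  rw [Finset.sum_congr rfl fun m hm => gsum n t k i m (Finset.mem_range.1 hm)]
  rw [lam, Finset.sum_mul]

lemma S_mul_S (n : ℕ) : Smat n * Smat n = 1 := by
  ext a b
  rw [Matrix.mul_apply]
  have h2 : Real.sqrt (2 / ((n : ℝ) + 1)) * Real.sqrt (2 / ((n : ℝ) + 1))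
      = 2 / ((n : ℝ) + 1) := Real.mul_self_sqrt (by positivity)
  have hterm : ∀ j : Fin n, Smat n a j * Smat n j b
      = (2 / ((n : ℝ) + 1)) *
          (Real.sin (((j : ℝ) + 1) * (Real.pi * ((a : ℝ) + 1) / ((n : ℝ) + 1)))
            * Real.sin (((j : ℝ) + 1) * (Real.pi * ((b : ℝ) + 1) / ((n : ℝ) + 1)))) := by
    intro j
    simp only [Smat, Matrix.of_apply]
    rw [show Real.pi * ((a : ℝ) + 1) * ((j : ℝ) + 1) / ((n : ℝ) + 1)
        = ((j : ℝ) + 1) * (Real.pi * ((a : ℝ) + 1) / ((n : ℝ) + 1)) from by ring,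
      show Real.pi * ((j : ℝ) + 1) * ((b : ℝ) + 1) / ((n : ℝ) + 1)
        = ((j : ℝ) + 1) * (Real.pi * ((b : ℝ) + 1) / ((n : ℝ) + 1)) from by ring,
      mul_mul_mul_comm, h2]
  rw [Finset.sum_congr rfl fun j _ => hterm j, ← Finset.mul_sum,
    Fin.sum_univ_eq_sum_range (fun j : ℕ =>
      Real.sin (((j : ℝ) + 1) * (Real.pi * ((a : ℝ) + 1) / ((n : ℝ) + 1)))
        * Real.sin (((j : ℝ) + 1) * (Real.pi * ((b : ℝ) + 1) / ((n : ℝ) + 1)))) n,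
    sin_orth n a b]
  by_cases h : a = b
  · subst h
    rw [if_pos rfl, Matrix.one_apply_eq]
    have hne : ((n : ℝ) + 1) ≠ 0 := by positivity
    field_simp
  · rw [if_neg h, mul_zero, Matrix.one_apply_ne h]

lemma tau_mul_S (n : ℕ) (t : ℕ → ℝ) :
    tauMat t n * Smat n = Smat n * Matrix.diagonal (lam t n) := by
  ext i k
  rw [Matrix.mul_apply, Matrix.mul_diagonal]
  have hterm : ∀ j : Fin n, tauMat t n i j * Smat n j k
      = Real.sqrt (2 / ((n : ℝ) + 1)) *
          (tauMat t n i j * Real.sin (((j : ℝ) + 1) * th n k)) := by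
    intro j
    simp only [Smat, Matrix.of_apply, th]
    rw [show Real.pi * ((j : ℝ) + 1) * ((k : ℝ) + 1) / ((n : ℝ) + 1)
        = ((j : ℝ) + 1) * (Real.pi * ((k : ℝ) + 1) / ((n : ℝ) + 1)) from by ring]
    ring
  rw [Finset.sum_congr rfl fun j _ => hterm j, ← Finset.mul_sum, tau_row n t k i]
  simp only [Smat, Matrix.of_apply, th]
  rw [show Real.pi * ((i : ℝ) + 1) * ((k : ℝ) + 1) / ((n : ℝ) + 1)
      = ((i : ℝ) + 1) * (Real.pi * ((k : ℝ) + 1) / ((n : ℝ) + 1)) from by ring]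
  ring

open Matrix in
theorem stmt12 (n : ℕ) (hn : 1 ≤ n) (t : ℕ → ℝ) :
    (Smat n * tauMat t n * Smat n).IsDiag ∧
      ∃ Λ : Matrix (Fin n) (Fin n) ℝ, Λ.IsDiag ∧ tauMat t n = Smat n * Λ * Smat n := by
  have hS := S_mul_S n
  have hT := tau_mul_S n t
  have hD : Smat n * tauMat t n * Smat n = Matrix.diagonal (lam t n) := by
    calc Smat n * tauMat t n * Smat n
        = Smat n * (tauMat t n * Smat n) := Matrix.mul_assoc _ _ _
      _ = Smat n * (Smat n * Matrix.diagonal (lam t n)) := by rw [hT]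
      _ = Smat n * Smat n * Matrix.diagonal (lam t n) := (Matrix.mul_assoc _ _ _).symm
      _ = Matrix.diagonal (lam t n) := by rw [hS, Matrix.one_mul]
  refine ⟨by rw [hD]; exact Matrix.isDiag_diagonal _,
    Matrix.diagonal (lam t n), Matrix.isDiag_diagonal _, ?_⟩
  calc tauMat t n = tauMat t n * (Smat n * Smat n) := by rw [hS, Matrix.mul_one]
    _ = tauMat t n * Smat n * Smat n := (Matrix.mul_assoc _ _ _).symm
    _ = Smat n * Matrix.diagonal (lam t n) * Smat n := by rw [hT]
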